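/- arXiv:2310.18571 — 3 statements merged into one kernel-verified Lean document; each statement's English description precedes it below -/
import Mathlib

section
/- For integers N ≥ 1 and N−1 ≥ a ≥ b ≥ 0, the quantity binom(2N−2−a−b, N−1−b)·(a−b+1)/(N−b) is an integer (it is the Plücker degree of the Schubert cycle Σ_{a,b} in G(1,N)). -/
/-! The quantity is a ballot number: with `n = 2N-2-a-b` and `m = N-1-b`, the identity
`(m+1) * C(n, m+1) = C(n, m) * (n-m)` shows that `m+1` divides both `C(n, m) * (m+1)` and
`C(n, m) * (n-m)`, hence their difference `C(n, m) * (a-b+1)`. -/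

theorem Nat.succ_dvd_choose_mul_sub (n m : ℕ) : m + 1 ∣ n.choose m * (m + 1 - (n - m)) := by
  have h_sub : m + 1 ∣ n.choose m * (n - m) :=
    ⟨n.choose (m + 1), by rw [← Nat.choose_succ_right_eq, mul_comm]⟩
  rw [Nat.mul_sub]
  exact Nat.dvd_sub (dvd_mul_left _ _) h_sub

/-- For integers N ≥ 1 and N−1 ≥ a ≥ b ≥ 0, the quantity
binom(2N−2−a−b, N−1−b)·(a−b+1)/(N−b) is an integer, i.e. (N−b) divides
binom(2N−2−a−b, N−1−b)·(a−b+1). -/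
theorem plucker_degree_is_integer (N a b : ℕ) (hN : 1 ≤ N) (hba : b ≤ a)
    (haN : a ≤ N - 1) :
    (N - b) ∣ Nat.choose (2 * N - 2 - a - b) (N - 1 - b) * (a - b + 1) := by
  have h := Nat.succ_dvd_choose_mul_sub (2 * N - 2 - a - b) (N - 1 - b)
  rwa [show N - 1 - b + 1 = N - b by omega,
    show N - b - (2 * N - 2 - a - b - (N - 1 - b)) = a - b + 1 by omega] at h
end

section
/- Let K be a field of characteristic ≠ 2 and let Q, Q' be the symmetric 3×3 matrices of the conics xy and xz, i.e. Q = [[0,1/2,0],[1/2,0,0],[0,0,0]] and Q' = [[0,0,1/2],[0,0,0],[1/2,0,0]]. Then for all (s,t) ≠ (0,0), the matrix sQ + tQ' has rank exactly 2; in particular det(sQ + tQ') = 0 for all s,t and no member of the pencil has rank 1. -/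
open Matrix Submodule Module

private lemma pencil_entries {K : Type*} [Field K] (s t : K) :
    (s • (!![0, 2⁻¹, 0; 2⁻¹, 0, 0; 0, 0, 0] : Matrix (Fin 3) (Fin 3) K) +
        t • (!![0, 0, 2⁻¹; 0, 0, 0; 2⁻¹, 0, 0] : Matrix (Fin 3) (Fin 3) K)) =
      !![0, s * 2⁻¹, t * 2⁻¹; s * 2⁻¹, 0, 0; t * 2⁻¹, 0, 0] := by
  ext i j
  fin_cases i <;> fin_cases j <;> simp [Matrix.vecHead, Matrix.vecTail, Function.comp]

private lemma pencil_rank_two {K : Type*} [Field K] (h2 : (2 : K) ≠ 0) (s t : K)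
    (h : ¬(s = 0 ∧ t = 0)) :
    (!![0, s * 2⁻¹, t * 2⁻¹; s * 2⁻¹, 0, 0; t * 2⁻¹, 0, 0] :
      Matrix (Fin 3) (Fin 3) K).rank = 2 := by
  set A : Matrix (Fin 3) (Fin 3) K :=
    !![0, s * 2⁻¹, t * 2⁻¹; s * 2⁻¹, 0, 0; t * 2⁻¹, 0, 0] with hA
  set v : Fin 3 → K := ![0, s * 2⁻¹, t * 2⁻¹] with hv
  set w : Fin 3 → K := ![1, 0, 0] with hw
  have hcol0 : Aᵀ 0 = v := by
    funext j; fin_cases j <;> simp [hA, hv, Matrix.vecHead, Matrix.vecTail, Function.comp]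
  have hcol1 : Aᵀ 1 = (s * 2⁻¹) • w := by
    funext j; fin_cases j <;> simp [hA, hv, hw, Matrix.vecHead, Matrix.vecTail, Function.comp]
  have hcol2 : Aᵀ 2 = (t * 2⁻¹) • w := by
    funext j; fin_cases j <;> simp [hA, hv, hw, Matrix.vecHead, Matrix.vecTail, Function.comp]
  have hst : s ≠ 0 ∨ t ≠ 0 := by tauto
  have hspan : Submodule.span K (Set.range Aᵀ) =
      Submodule.span K (Set.range ![v, w]) := by
    apply le_antisymm
    · rw [Submodule.span_le]
      rintro x ⟨i, rfl⟩
      have hvmem : v ∈ Submodule.span K (Set.range ![v, w]) :=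
        Submodule.subset_span ⟨0, rfl⟩
      have hwmem : w ∈ Submodule.span K (Set.range ![v, w]) :=
        Submodule.subset_span ⟨1, rfl⟩
      fin_cases i
      · show Aᵀ 0 ∈ _; rw [hcol0]; exact hvmem
      · show Aᵀ 1 ∈ _; rw [hcol1]; exact Submodule.smul_mem _ _ hwmem
      · show Aᵀ 2 ∈ _; rw [hcol2]; exact Submodule.smul_mem _ _ hwmem
    · rw [Submodule.span_le]
      rintro x ⟨i, rfl⟩
      have hvmem : v ∈ Submodule.span K (Set.range Aᵀ) := by
        rw [← hcol0]; exact Submodule.subset_span ⟨0, rfl⟩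
      have hwmem : w ∈ Submodule.span K (Set.range Aᵀ) := by
        rcases hst with hs | ht
        · have : (s * 2⁻¹)⁻¹ • ((s * 2⁻¹) • w) ∈ Submodule.span K (Set.range Aᵀ) := by
            apply Submodule.smul_mem
            rw [← hcol1]; exact Submodule.subset_span ⟨1, rfl⟩
          rwa [smul_smul, inv_mul_cancel₀ (by
            exact mul_ne_zero hs (inv_ne_zero h2)), one_smul] at this
        · have : (t * 2⁻¹)⁻¹ • ((t * 2⁻¹) • w) ∈ Submodule.span K (Set.range Aᵀ) := by
            apply Submodule.smul_mem
            rw [← hcol2]; exact Submodule.subset_span ⟨2, rfl⟩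
          rwa [smul_smul, inv_mul_cancel₀ (by
            exact mul_ne_zero ht (inv_ne_zero h2)), one_smul] at this
      fin_cases i
      · exact hvmem
      · exact hwmem
  have hli : LinearIndependent K ![v, w] := by
    rw [LinearIndependent.pair_iff]
    intro a b hab
    have h0 := congrFun hab 0
    have h1 := congrFun hab 1
    have h2' := congrFun hab 2
    simp [hv, hw] at h0 h1 h2'
    have hb : b = 0 := h0
    have ha : a = 0 := by
      rcases hst with hs | ht
      · rcases h1 with h | h
        · exact h
        · rcases h with h | h
          · exact absurd h hs
          · exact absurd h h2
      · rcases h2' with h | h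
        · exact h
        · rcases h with h | h
          · exact absurd h ht
          · exact absurd h h2
    exact ⟨ha, hb⟩
  rw [Matrix.rank_eq_finrank_span_cols, show A.col = Aᵀ from rfl, hspan, finrank_span_eq_card hli]
  simp

/-- For the singular pencil O₇ = ⟨xy, xz⟩ with symmetric matrices
Q = [[0,1/2,0],[1/2,0,0],[0,0,0]] and Q' = [[0,0,1/2],[0,0,0],[1/2,0,0]]:
every nonzero member has rank exactly 2; in particular det = 0 everywhere and
no member has rank 1. -/
theorem pencil_O7 {K : Type*} [Field K] (h2 : (2 : K) ≠ 0) :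
    (∀ s t : K, ¬(s = 0 ∧ t = 0) →
      (s • (!![0, 2⁻¹, 0; 2⁻¹, 0, 0; 0, 0, 0] : Matrix (Fin 3) (Fin 3) K) +
        t • (!![0, 0, 2⁻¹; 0, 0, 0; 2⁻¹, 0, 0] : Matrix (Fin 3) (Fin 3) K)).rank
        = 2) ∧
    (∀ s t : K,
      Matrix.det
          (s • (!![0, 2⁻¹, 0; 2⁻¹, 0, 0; 0, 0, 0] : Matrix (Fin 3) (Fin 3) K) +
            t • (!![0, 0, 2⁻¹; 0, 0, 0; 2⁻¹, 0, 0] : Matrix (Fin 3) (Fin 3) K))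
        = 0) ∧
    (∀ s t : K,
      (s • (!![0, 2⁻¹, 0; 2⁻¹, 0, 0; 0, 0, 0] : Matrix (Fin 3) (Fin 3) K) +
        t • (!![0, 0, 2⁻¹; 0, 0, 0; 2⁻¹, 0, 0] : Matrix (Fin 3) (Fin 3) K)).rank
        ≠ 1) := by
  refine ⟨fun s t h => ?_, fun s t => ?_, fun s t => ?_⟩
  · rw [pencil_entries]; exact pencil_rank_two h2 s t h
  · rw [pencil_entries, Matrix.det_fin_three]
    simp [Matrix.vecHead, Matrix.vecTail, Function.comp]
  · by_cases h : s = 0 ∧ t = 0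
    · obtain ⟨rfl, rfl⟩ := h
      simp
    · rw [pencil_entries, pencil_rank_two h2 s t h]
      omega
end

section
/- Let K be an algebraically closed field of characteristic 0, let J be the catalecticant of binary quartics as above, and let λ ∈ K, λ ≠ 0. Fix μ ∈ K with μ² = −λ. Then for each sign ε ∈ {+1,−1} and all u,v ∈ K, the quartic u·(x⁴ + λy⁴) + v·(xy(x² + εμ y²)) satisfies J = 0; i.e., the two lines in P⁴ joining [x⁴+λy⁴] to [xy(x²±μy²)] are contained in the cubic hypersurface J = 0. -/
theorem secant_lines_in_catalecticant_general {K : Type*} [Field K] (lam : K) (μ : K) (hμ : μ ^ 2 = -lam)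
    (ε : K) (hε : ε = 1 ∨ ε = -1) (u v : K) :
    let a₀ := u
    let a₁ := v
    let a₂ : K := 0
    let a₃ := ε * μ * v
    let a₄ := u * lam
    72 * a₀ * a₂ * a₄ - 27 * a₀ * a₃ ^ 2 - 27 * a₁ ^ 2 * a₄ +
      9 * a₁ * a₂ * a₃ - 2 * a₂ ^ 3 = 0 := by
  have hεμ : (ε * μ) ^ 2 = -lam := by
    rcases hε with rfl | rfl <;> simpa using hμ
  intro a₀ a₁ a₂ a₃ a₄
  -- with a₂ = 0, J = −27uv²((εμ)² + λ)
  linear_combination (-27 * u * v ^ 2) * hεμ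

/-- For λ ≠ 0 and μ² = −λ, the lines joining [x⁴+λy⁴] to [xy(x²±μy²)] lie in
the catalecticant cubic J = 0: the quartic u(x⁴+λy⁴) + v·xy(x²+εμy²), which has
coefficients (u, v, 0, εμv, uλ), satisfies J = 0 for all u,v. -/
theorem secant_lines_in_catalecticant {K : Type*} [Field K] [IsAlgClosed K]
    [CharZero K] (lam : K) (hlam : lam ≠ 0) (μ : K) (hμ : μ ^ 2 = -lam)
    (ε : K) (hε : ε = 1 ∨ ε = -1) (u v : K) :
    let a₀ := u
    let a₁ := v
    let a₂ : K := 0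
    let a₃ := ε * μ * v
    let a₄ := u * lam
    72 * a₀ * a₂ * a₄ - 27 * a₀ * a₃ ^ 2 - 27 * a₁ ^ 2 * a₄ +
      9 * a₁ * a₂ * a₃ - 2 * a₂ ^ 3 = 0 :=
  secant_lines_in_catalecticant_general lam μ hμ ε hε u v
end
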